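/- arXiv:1610.05207 — 5 statements merged into one kernel-verified Lean document; each statement's English description precedes it below -/
import Mathlib

section
/- Let R be a commutative ring, δ₁, δ₂ : R → R two R-derivations, n a finite type, and D an n×n matrix over R with D * D = ω • 1. Set Φ = D.map δ₁, Ψ = D.map δ₂, and H = (D.map δ₁).map δ₂ (entrywise application of δ₁ followed by δ₂). Then Φ * Ψ + Ψ * Φ + D * H + H * D = δ₂(δ₁(ω)) • 1. -/
/-!
Differentiate the curvature equation `D * D = ω • 1` entrywise, first by `δ₁` and then by `δ₂`.
By the Leibniz rule for matrix products, the first derivative is `Φ * D + D * Φ`, and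
differentiating this once more produces the four terms `H * D + Φ * Ψ + Ψ * Φ + D * H`.
-/

namespace Matrix

variable {l m n R : Type*}

theorem map_mul_of_leibniz [Fintype m] [NonUnitalNonAssocRing R] (δ : R → R)
    (hadd : ∀ x y, δ (x + y) = δ x + δ y) (hmul : ∀ x y, δ (x * y) = δ x * y + x * δ y)
    (A : Matrix l m R) (B : Matrix m n R) :
    (A * B).map δ = A.map δ * B + A * B.map δ := by
  ext i j
  simp only [map_apply, mul_apply, add_apply, ← Finset.sum_add_distrib, ← hmul]
  exact map_sum (AddMonoidHom.mk' δ hadd) _ _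

theorem map_smul_one_of_map_zero [DecidableEq n] [NonAssocSemiring R] {δ : R → R}
    (hzero : δ 0 = 0) (ω : R) :
    (ω • (1 : Matrix n n R)).map δ = δ ω • 1 := by
  rw [smul_one_eq_diagonal, smul_one_eq_diagonal, diagonal_map hzero]

end Matrix

open Matrix in
/-- Lemma 4.4 (Zemke), abstract form: the anticommutator of two entrywise
derivatives of a curved differential is chain homotopic to the mixed second
derivative of the curvature. -/
theorem anticommutator_of_basepoint_actions
    {R : Type*} [CommRing R] (δ₁ δ₂ : R → R)
    (hadd₁ : ∀ x y, δ₁ (x + y) = δ₁ x + δ₁ y)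
    (hmul₁ : ∀ x y, δ₁ (x * y) = δ₁ x * y + x * δ₁ y)
    (hadd₂ : ∀ x y, δ₂ (x + y) = δ₂ x + δ₂ y)
    (hmul₂ : ∀ x y, δ₂ (x * y) = δ₂ x * y + x * δ₂ y)
    {n : Type*} [Fintype n] [DecidableEq n]
    (D : Matrix n n R) (ω : R) (hD : D * D = ω • (1 : Matrix n n R)) :
    D.map δ₁ * D.map δ₂ + D.map δ₂ * D.map δ₁
      + D * (D.map δ₁).map δ₂ + (D.map δ₁).map δ₂ * D
      = δ₂ (δ₁ ω) • (1 : Matrix n n R) := by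
  have hzero₁ : δ₁ 0 = 0 := (AddMonoidHom.mk' δ₁ hadd₁).map_zero
  have hzero₂ : δ₂ 0 = 0 := (AddMonoidHom.mk' δ₂ hadd₂).map_zero
  have hsecond := congrArg (fun M => (M.map δ₁).map δ₂) hD
  simp only [map_mul_of_leibniz δ₁ hadd₁ hmul₁, Matrix.map_add δ₂ hadd₂,
    map_mul_of_leibniz δ₂ hadd₂ hmul₂, map_smul_one_of_map_zero hzero₁,
    map_smul_one_of_map_zero hzero₂] at hsecond
  rw [← hsecond]
  abel
end

section
/- Let S be a commutative ring of characteristic 2, n a finite type, C ∈ S[U] a polynomial of natDegree at most 1, and D an n×n matrix over the polynomial ring S[U] with D * D = C • 1. Let Φ be the matrix obtained by applying the formal derivative d/dU to each entry of D, and let H be the matrix obtained by applying the second Hasse (divided) derivative to each entry of D. Then Φ * Φ = D * H + H * D. -/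
/-!
Apply the second Hasse derivative entrywise to `D * D = C • 1`. By the Leibniz rule
`∂⁽²⁾(f g) = f ∂⁽²⁾g + f' g' + ∂⁽²⁾f g`, the left side becomes `D H + Φ Φ + H D`, while the right
side vanishes because `C` has degree at most 1. In characteristic 2 this is the claim.
-/

open Polynomial Finset

theorem Polynomial.hasseDeriv_two_mul {R : Type*} [Semiring R] (f g : R[X]) :
    hasseDeriv 2 (f * g) =
      f * hasseDeriv 2 g + derivative f * derivative g + hasseDeriv 2 f * g := by
  rw [hasseDeriv_mul, Nat.sum_antidiagonal_eq_sum_range_succ_mk]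
  simp [sum_range_succ]

namespace Matrix

variable {l m n R : Type*} [Semiring R]

theorem map_hasseDeriv_two_mul [Fintype m] (A : Matrix l m R[X]) (B : Matrix m n R[X]) :
    (A * B).map (fun p => hasseDeriv 2 p) =
      A * B.map (fun p => hasseDeriv 2 p)
        + A.map (fun p => derivative p) * B.map (fun p => derivative p)
        + A.map (fun p => hasseDeriv 2 p) * B := by
  ext i j
  simp only [mul_apply, map_apply, add_apply, map_sum, hasseDeriv_two_mul, sum_add_distrib]

theorem map_hasseDeriv_smul_one [DecidableEq n] {k : ℕ} {C : R[X]} (hC : C.natDegree < k) :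
    (C • (1 : Matrix n n R[X])).map (fun p => hasseDeriv k p) = 0 := by
  rw [smul_one_eq_diagonal, diagonal_map (map_zero _), hasseDeriv_eq_zero_of_lt_natDegree C k hC,
    diagonal_zero]

end Matrix

/-- Lemma 4.5 (Zemke), abstract form: if the curvature C has degree at most 1 in U,
the square of the entrywise derivative of the differential is chain homotopic to
zero, via the second Hasse derivative. -/
theorem basepoint_action_squares_nullhomotopic
    {S : Type*} [CommRing S] [CharP S 2]
    {n : Type*} [Fintype n] [DecidableEq n]
    (C : Polynomial S) (hC : C.natDegree ≤ 1)
    (D : Matrix n n (Polynomial S))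
    (hD : D * D = C • (1 : Matrix n n (Polynomial S))) :
    D.map (fun p => Polynomial.derivative p) * D.map (fun p => Polynomial.derivative p)
      = D * D.map (fun p => Polynomial.hasseDeriv 2 p)
        + D.map (fun p => Polynomial.hasseDeriv 2 p) * D := by
  have h := congrArg (Matrix.map · fun p => hasseDeriv 2 p) hD
  rw [Matrix.map_hasseDeriv_two_mul, Matrix.map_hasseDeriv_smul_one (by omega)] at h
  refine Matrix.ext fun i j => ?_
  have hij := congrFun₂ h i j
  simp only [Matrix.add_apply, Matrix.zero_apply] at hij ⊢
  rw [add_right_comm, CharTwo.add_eq_zero] at hij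
  exact hij.symm
end

section
/- Let R be a ring of characteristic 2 (i.e., 2 = 0 in R), let u be in the center of R, and let a₀, a₁, a₂, s⁻, s⁺ ∈ R satisfy: a₀ * a₀ = u, a₀ * a₁ + a₁ * a₀ = u, a₀ * a₂ + a₂ * a₀ = u, and s⁻ * a₁ * s⁺ = s⁻ * a₂ * s⁺. Then s⁻ * a₀ * (a₂ + a₀) * (a₁ + a₀) * s⁺ = s⁻ * a₀ * a₂ * a₁ * s⁺. -/
/-!
Expanding, `a₀ (a₂ + a₀) (a₁ + a₀) = a₀ a₂ a₁ + a₀ a₂ a₀ + u a₁ + u a₀`, and the relation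
`a₀ a₂ = u - a₂ a₀` with `a₀² = u` central turns `a₀ a₂ a₀` into `u a₀ - u a₂`. Of the two
`u a₀`-terms nothing survives in characteristic 2, and `u (a₁ - a₂)` vanishes between `s⁻` and
`s⁺` because `u` is central and `s⁻ a₁ s⁺ = s⁻ a₂ s⁺`.
-/

section

variable {R : Type*} [Ring R]

theorem mul_mul_self_eq_of_add_mul_eq {a b u : R} (ha : a * a = u) (hab : a * b + b * a = u)
    (hub : Commute u b) : a * b * a = u * a - u * b :=
  calc a * b * a = (u - b * a) * a := by rw [eq_sub_of_add_eq hab]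
    _ = u * a - b * (a * a) := by noncomm_ring
    _ = u * a - u * b := by rw [ha, hub.eq]

theorem mul_add_mul_add_eq_of_add_mul_eq {a₀ a₁ a₂ u : R} (h00 : a₀ * a₀ = u)
    (h02 : a₀ * a₂ + a₂ * a₀ = u) (hu₂ : Commute u a₂) :
    a₀ * (a₂ + a₀) * (a₁ + a₀) = a₀ * a₂ * a₁ + u * (a₁ - a₂) + 2 * (u * a₀) :=
  calc a₀ * (a₂ + a₀) * (a₁ + a₀)
      = a₀ * a₂ * a₁ + a₀ * a₂ * a₀ + a₀ * a₀ * a₁ + a₀ * a₀ * a₀ := by noncomm_ring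
    _ = a₀ * a₂ * a₁ + (u * a₀ - u * a₂) + u * a₁ + u * a₀ := by
      rw [mul_mul_self_eq_of_add_mul_eq h00 h02 hu₂, h00]
    _ = a₀ * a₂ * a₁ + u * (a₁ - a₂) + 2 * (u * a₀) := by noncomm_ring

theorem mul_mul_mul_eq_of_commute {s t u x : R} (hus : Commute u s) :
    s * (u * x) * t = u * (s * x * t) := by
  rw [← mul_assoc, ← hus.eq]; simp only [mul_assoc]

end

theorem trivalent_vertex_splitting_general
    {R : Type*} [Ring R] (h2 : (2 : R) = 0)
    (u : R) (hu : ∀ x : R, u * x = x * u)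
    (a₀ a₁ a₂ sm sp : R)
    (h00 : a₀ * a₀ = u)
    (h02 : a₀ * a₂ + a₂ * a₀ = u)
    (htriv : sm * a₁ * sp = sm * a₂ * sp) :
    sm * a₀ * (a₂ + a₀) * (a₁ + a₀) * sp = sm * a₀ * a₂ * a₁ * sp :=
  calc sm * a₀ * (a₂ + a₀) * (a₁ + a₀) * sp = sm * (a₀ * (a₂ + a₀) * (a₁ + a₀)) * sp := by
        simp only [mul_assoc]
    _ = sm * (a₀ * a₂ * a₁) * sp + u * (sm * a₁ * sp - sm * a₂ * sp) := by
        rw [mul_add_mul_add_eq_of_add_mul_eq h00 h02 (hu a₂), h2, zero_mul, add_zero, mul_add,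
          add_mul, mul_mul_mul_eq_of_commute (hu sm), mul_sub, sub_mul, mul_sub]
    _ = sm * a₀ * a₂ * a₁ * sp := by
        rw [htriv, sub_self, mul_zero, add_zero]
        simp only [mul_assoc]

/-- Equation (11.2) in Lemma 11.4 (Zemke): invariance of the graph action map
under splitting off a consecutive pair of edges to form a trivalent vertex. -/
theorem trivalent_vertex_splitting
    {R : Type*} [Ring R] (h2 : (2 : R) = 0)
    (u : R) (hu : ∀ x : R, u * x = x * u)
    (a₀ a₁ a₂ sm sp : R)
    (h00 : a₀ * a₀ = u)
    (h01 : a₀ * a₁ + a₁ * a₀ = u)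
    (h02 : a₀ * a₂ + a₂ * a₀ = u)
    (htriv : sm * a₁ * sp = sm * a₂ * sp) :
    sm * a₀ * (a₂ + a₀) * (a₁ + a₀) * sp = sm * a₀ * a₂ * a₁ * sp :=
  trivalent_vertex_splitting_general h2 u hu a₀ a₁ a₂ sm sp h00 h02 htriv
end

section
/- Let R be a ring of characteristic 2 and let t⁻, t⁺, s⁻, s⁺, s'⁺, t'⁺, φ' ∈ R satisfy: (1) t⁺ * s⁻ + s⁺ * t⁻ + 1 = 0; (2) s'⁺ * s⁺ = s⁺ * s'⁺; (3) t⁻ * s⁺ = 1; (4) s'⁺ = φ' * t'⁺; (5) t'⁺ * t⁺ = t⁺ * t'⁺; (6) t⁻ * φ' * t⁺ = 1. Then t⁻ * s'⁺ + s'⁺ * t⁻ = t'⁺ * s⁻. -/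
/-!
Multiply the relation `T⁺S⁻ + S⁺T⁻ + 1 = 0` on the left by `T⁻S'⁺ = T⁻Φ'T'⁺`. Each product
collapses by the same cancellation `b c a = c` (for `c` commuting with `a` and `b a = 1`):
with `T⁻Φ'·T'⁺·T⁺` in the first term and `T⁻·S'⁺·S⁺` in the second. This leaves
`T'⁺S⁻ + S'⁺T⁻ + T⁻S'⁺ = 0`, which is the claim in characteristic 2.
-/

theorem Commute.mul_mul_eq_of_mul_eq_one {M : Type*} [Monoid M] {a b c : M}
    (hca : Commute c a) (hba : b * a = 1) : b * c * a = c := by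
  rw [mul_assoc, hca.eq, ← mul_assoc, hba, one_mul]

theorem add_eq_zero_iff_eq_of_two_eq_zero {R : Type*} [NonAssocRing R] (h2 : (2 : R) = 0)
    {a b : R} : a + b = 0 ↔ a = b := by
  have neg_self : -b = b := neg_eq_of_add_eq_zero_right (by rw [← two_mul, h2, zero_mul])
  rw [add_eq_zero_iff_eq_neg, neg_self]

/-- Lemma 4.26 (Zemke), algebraic content: the bypass triple from
quasi-stabilization, T⁻S'⁺ + S'⁺T⁻ ≃ T'⁺S⁻. -/
theorem bypass_triple_from_quasi_stabilization
    {R : Type*} [Ring R] (h2 : (2 : R) = 0)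
    (tm tp sm sp sp' tp' φ' : R)
    (h1 : tp * sm + sp * tm + 1 = 0)
    (h2' : sp' * sp = sp * sp')
    (h3 : tm * sp = 1)
    (h4 : sp' = φ' * tp')
    (h5 : tp' * tp = tp * tp')
    (h6 : tm * φ' * tp = 1) :
    tm * sp' + sp' * tm = tp' * sm := by
  have cancel_tp : tm * sp' * tp = tp' := by
    rw [h4, ← mul_assoc]
    exact Commute.mul_mul_eq_of_mul_eq_one h5 h6
  have cancel_sp : tm * sp' * sp = sp' := Commute.mul_mul_eq_of_mul_eq_one h2' h3
  have sum_eq_zero : tm * sp' + sp' * tm + tp' * sm = 0 :=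
    calc tm * sp' + sp' * tm + tp' * sm = tm * sp' * (tp * sm + sp * tm + 1) := by
          rw [mul_add, mul_add, ← mul_assoc, cancel_tp, ← mul_assoc, cancel_sp, mul_one]
          abel
      _ = 0 := by rw [h1, mul_zero]
  exact (add_eq_zero_iff_eq_of_two_eq_zero h2).mp sum_eq_zero
end

section
/- Let R be a ring of characteristic 2 and let s⁻, s⁺, s'⁺, t⁻, t'⁺, τ, ψ, ψ' ∈ R satisfy: (1) s'⁺ = s⁺ * τ; (2) t⁻ * s⁺ = 1; (3) t⁻ = s⁻ * ψ; (4) s⁻ * ψ = s⁻ * ψ' + ψ' * s⁻; (5) t'⁺ = ψ' * s'⁺; (6) s⁻ * s⁺ = 0. Then τ = t⁻ * s'⁺ and t⁻ * s'⁺ = s⁻ * t'⁺. -/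
theorem basepoint_moving_map_formula_general
    {R : Type*} [Ring R]
    (sm sp sp' tm tp' τ ψ ψ' : R)
    (h1 : sp' = sp * τ)
    (h3 : tm * sp = 1)
    (h4 : tm = sm * ψ)
    (h5 : sm * ψ = sm * ψ' + ψ' * sm)
    (h6 : tp' = ψ' * sp')
    (h7 : sm * sp = 0) :
    τ = tm * sp' ∧ tm * sp' = sm * tp' := by
  constructor
  · rw [h1, ← mul_assoc, h3, one_mul]
  · calc tm * sp' = (sm * ψ' + ψ' * sm) * sp * τ := by rw [h4, h5, h1, mul_assoc]
      _ = sm * (ψ' * (sp * τ)) + ψ' * (sm * sp) * τ := by noncomm_ring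
      _ = sm * tp' := by rw [h7, h6, h1, mul_zero, zero_mul, add_zero]

/-- Lemma 4.21 (Zemke), algebraic content: the basepoint-moving map τ satisfies
τ ≃ T⁻S'⁺ ≃ S⁻T'⁺. -/
theorem basepoint_moving_map_formula
    {R : Type*} [Ring R] (h2 : (2 : R) = 0)
    (sm sp sp' tm tp' τ ψ ψ' : R)
    (h1 : sp' = sp * τ)
    (h3 : tm * sp = 1)
    (h4 : tm = sm * ψ)
    (h5 : sm * ψ = sm * ψ' + ψ' * sm)
    (h6 : tp' = ψ' * sp')
    (h7 : sm * sp = 0) :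
    τ = tm * sp' ∧ tm * sp' = sm * tp' :=
  basepoint_moving_map_formula_general sm sp sp' tm tp' τ ψ ψ' h1 h3 h4 h5 h6 h7
end
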